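/- The function f₁(x) = 1/(ln(x) - ψ(x)) - 2x tends to -1/3 as x → ∞. -/

import Mathlib

open Real Filter Topology Set

noncomputable def digamma (x : ℝ) : ℝ := deriv Real.Gamma x / Real.Gamma x

noncomputable def trigamma (x : ℝ) : ℝ := deriv digamma x

/-!
Write `F = log - ψ`. The recurrence `ψ(x + 1) = ψ(x) + 1/x` gives
`F(x) - F(x + 1) = 1/x - log (1 + 1/x)`, and convexity of `log ∘ Γ` squeezes `F(x)` between `0`
and `log x - log (x - 1)`, so `F → 0`. A function tending to `0` at infinity whose one-step
decrements are at most those of another such function stays below it; comparing with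
`1/(2x) + 1/(12x²)` from above and with `1/(2x) + 1/(12x²) - 1/(10x³)` from below reduces, by the
Taylor expansion of `log (1 + u)` to order six, to polynomial inequalities valid for `x ≥ 10`.
Hence `x² (F(x) - 1/(2x)) → 1/12`, and inverting, `1/F(x) - 2x → -4/12 = -1/3`.
-/

lemma nonneg_of_tendsto_zero_of_apply_add_one_le {H : ℝ → ℝ} {a x : ℝ}
    (hlim : Tendsto H atTop (𝓝 0)) (hstep : ∀ y ≥ a, H (y + 1) ≤ H y) (hx : a ≤ x) : 0 ≤ H x := by
  have hmono : ∀ n : ℕ, H (x + n) ≤ H x := by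
    intro n
    induction n with
    | zero => simp
    | succ n ih =>
      rw [Nat.cast_succ, ← add_assoc]
      exact (hstep _ (by linarith [n.cast_nonneg (α := ℝ)])).trans ih
  exact le_of_tendsto' (hlim.comp (tendsto_atTop_add_const_left _ x tendsto_natCast_atTop_atTop))
    hmono

lemma abs_log_one_add_sub_taylor_le {u : ℝ} (hu₀ : 0 < u) (hu : u ≤ 1 / 2) :
    |log (1 + u) - (u - u ^ 2 / 2 + u ^ 3 / 3 - u ^ 4 / 4 + u ^ 5 / 5 - u ^ 6 / 6)|
      ≤ 2 * u ^ 7 := by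
  have h := abs_log_sub_add_sum_range_le (x := -u) (by rw [abs_neg, abs_of_pos hu₀]; linarith) 6
  have hsum : ∑ i ∈ Finset.range 6, (-u) ^ (i + 1) / (i + 1) =
      -(u - u ^ 2 / 2 + u ^ 3 / 3 - u ^ 4 / 4 + u ^ 5 / 5 - u ^ 6 / 6) := by
    simp only [Finset.sum_range_succ, Finset.sum_range_zero]
    ring
  rw [hsum, sub_neg_eq_add, abs_neg, abs_of_pos hu₀, neg_add_eq_sub] at h
  refine h.trans ?_
  rw [div_le_iff₀ (by linarith), show 6 + 1 = 7 from rfl]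
  nlinarith [mul_nonneg (pow_pos hu₀ 7).le (by linarith : (0 : ℝ) ≤ 1 - 2 * u)]

lemma tendsto_one_div_const_mul_pow_atTop {a : ℝ} (ha : 0 < a) {n : ℕ} (hn : n ≠ 0) :
    Tendsto (fun x : ℝ => 1 / (a * x ^ n)) atTop (𝓝 0) :=
  tendsto_const_nhds.div_atTop ((tendsto_pow_atTop hn).const_mul_atTop ha)

lemma tendsto_one_div_sub_two_mul_of_tendsto_sq_mul {f : ℝ → ℝ} {c : ℝ}
    (hf : Tendsto (fun x => x ^ 2 * (f x - 1 / (2 * x))) atTop (𝓝 c)) :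
    Tendsto (fun x => 1 / f x - 2 * x) atTop (𝓝 (-4 * c)) := by
  have hmul : Tendsto (fun x => x * f x) atTop (𝓝 (1 / 2)) := by
    have h := (tendsto_const_nhds (x := (1 / 2 : ℝ))).add (tendsto_inv_atTop_zero.mul hf)
    rw [zero_mul, add_zero] at h
    refine h.congr' ?_
    filter_upwards [eventually_ne_atTop 0] with x hx
    field_simp
    ring
  have h := (hf.const_mul (-2)).div hmul (by norm_num)
  rw [show -2 * c / (1 / 2) = -4 * c by ring] at h
  refine h.congr' ?_
  filter_upwards [hmul.eventually_ne (by norm_num : (1 / 2 : ℝ) ≠ 0)] with x hx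
  have hx₀ : x ≠ 0 := left_ne_zero_of_mul hx
  have hf₀ : f x ≠ 0 := right_ne_zero_of_mul hx
  simp only [Pi.div_apply]
  field_simp
  ring

lemma Real.differentiableAt_Gamma_of_pos {x : ℝ} (hx : 0 < x) : DifferentiableAt ℝ Gamma x :=
  differentiableAt_Gamma fun m => ((neg_nonpos.mpr m.cast_nonneg).trans_lt hx).ne'

lemma differentiableAt_log_Gamma {x : ℝ} (hx : 0 < x) :
    DifferentiableAt ℝ (log ∘ Gamma) x :=
  (differentiableAt_Gamma_of_pos hx).log (Gamma_pos_of_pos hx).ne'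

lemma digamma_eq_deriv_log_Gamma {x : ℝ} (hx : 0 < x) :
    digamma x = deriv (log ∘ Gamma) x := by
  rw [Function.comp_def,
    deriv.log (differentiableAt_Gamma_of_pos hx) (Gamma_pos_of_pos hx).ne', digamma]

lemma log_Gamma_add_one {x : ℝ} (hx : 0 < x) :
    log (Gamma (x + 1)) = log x + log (Gamma x) := by
  rw [Gamma_add_one hx.ne', log_mul hx.ne' (Gamma_pos_of_pos hx).ne']

lemma digamma_add_one {x : ℝ} (hx : 0 < x) : digamma (x + 1) = digamma x + x⁻¹ := by
  have hlog : (fun y => log (Gamma (y + 1))) =ᶠ[𝓝 x] fun y => log y + (log ∘ Gamma) y := by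
    filter_upwards [eventually_gt_nhds hx] with y hy using log_Gamma_add_one hy
  rw [digamma_eq_deriv_log_Gamma (by positivity), digamma_eq_deriv_log_Gamma hx,
    ← deriv_comp_add_const, Function.comp_def, hlog.deriv_eq,
    deriv_fun_add (differentiableAt_log hx.ne') (differentiableAt_log_Gamma hx), deriv_log,
    add_comm, Function.comp_def]

lemma digamma_le_log {x : ℝ} (hx : 0 < x) : digamma x ≤ log x := by
  have h := convexOn_log_Gamma.deriv_le_slope (mem_Ioi.mpr hx) (mem_Ioi.mpr (by positivity))
    (lt_add_one x) (differentiableAt_log_Gamma hx)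
  rwa [slope_def_field, Function.comp_apply, Function.comp_apply, log_Gamma_add_one hx,
    add_sub_cancel_right, add_sub_cancel_left, div_one, ← digamma_eq_deriv_log_Gamma hx] at h

lemma log_sub_one_le_digamma {x : ℝ} (hx : 1 < x) : log (x - 1) ≤ digamma x := by
  have hx₁ : 0 < x - 1 := sub_pos.mpr hx
  have h := convexOn_log_Gamma.slope_le_deriv (mem_Ioi.mpr hx₁) (mem_Ioi.mpr (by linarith))
    (sub_one_lt x) (differentiableAt_log_Gamma (by linarith))
  have hrec := log_Gamma_add_one hx₁
  rw [sub_add_cancel] at hrec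
  rwa [slope_def_field, Function.comp_apply, Function.comp_apply, hrec, add_sub_cancel_right,
    sub_sub_cancel, div_one, ← digamma_eq_deriv_log_Gamma (by linarith)] at h

lemma tendsto_log_sub_digamma_atTop : Tendsto (fun x => log x - digamma x) atTop (𝓝 0) := by
  have hgap : Tendsto (fun x : ℝ => -log (1 - x⁻¹)) atTop (𝓝 0) := by
    have h := ((continuousAt_log one_ne_zero).tendsto.comp
      (by simpa using tendsto_inv_atTop_zero.const_sub (1 : ℝ))).neg
    simpa using h
  refine tendsto_of_tendsto_of_tendsto_of_le_of_le' tendsto_const_nhds hgap ?_ ?_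
  · filter_upwards [eventually_gt_atTop 0] with x hx
    linarith [digamma_le_log hx]
  · filter_upwards [eventually_gt_atTop 1] with x hx
    have hx₀ : x ≠ 0 := by positivity
    have : log (1 - x⁻¹) = log (x - 1) - log x := by
      rw [← log_div (by linarith) hx₀, sub_div, div_self hx₀, one_div]
    linarith [log_sub_one_le_digamma hx]

lemma log_sub_digamma_sub_add_one {x : ℝ} (hx : 0 < x) :
    (log x - digamma x) - (log (x + 1) - digamma (x + 1)) = x⁻¹ - log (1 + x⁻¹) := by
  rw [digamma_add_one hx, show 1 + x⁻¹ = (x + 1) / x by field_simp, log_div (by positivity) hx.ne']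
  ring

lemma inv_sub_log_one_add_inv_le {x : ℝ} (hx : 10 ≤ x) :
    x⁻¹ - log (1 + x⁻¹) ≤
      (1 / (2 * x) + 1 / (12 * x ^ 2)) - (1 / (2 * (x + 1)) + 1 / (12 * (x + 1) ^ 2)) := by
  have hx₀ : 0 < x := by linarith
  have hlog := (abs_le.mp (abs_log_one_add_sub_taylor_le (inv_pos.mpr hx₀)
    (by rw [inv_le_comm₀ hx₀ (by norm_num)]; linarith))).1
  -- cleared of denominators, the gap left by the Taylor bound is a polynomial in `x - 10` with
  -- positive coefficients
  have key : ((1 / (2 * x) + 1 / (12 * x ^ 2)) - (1 / (2 * (x + 1)) + 1 / (12 * (x + 1) ^ 2))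
      - (x⁻¹ - (x⁻¹ - x⁻¹ ^ 2 / 2 + x⁻¹ ^ 3 / 3 - x⁻¹ ^ 4 / 4 + x⁻¹ ^ 5 / 5 - x⁻¹ ^ 6 / 6
        - 2 * x⁻¹ ^ 7))) * (60 * x ^ 7 * (x + 1) ^ 2)
      = 3580 + 4890 * (x - 10) + 1042 * (x - 10) ^ 2 + 79 * (x - 10) ^ 3 + 2 * (x - 10) ^ 4 := by
    field_simp
    ring
  have hy : 0 ≤ x - 10 := by linarith
  have hpos : 0 ≤ 3580 + 4890 * (x - 10) + 1042 * (x - 10) ^ 2 + 79 * (x - 10) ^ 3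
      + 2 * (x - 10) ^ 4 := by positivity
  have hM : 0 < 60 * x ^ 7 * (x + 1) ^ 2 := by positivity
  nlinarith

lemma le_inv_sub_log_one_add_inv {x : ℝ} (hx : 10 ≤ x) :
    (1 / (2 * x) + 1 / (12 * x ^ 2) - 1 / (10 * x ^ 3))
        - (1 / (2 * (x + 1)) + 1 / (12 * (x + 1) ^ 2) - 1 / (10 * (x + 1) ^ 3))
      ≤ x⁻¹ - log (1 + x⁻¹) := by
  have hx₀ : 0 < x := by linarith
  have hlog := (abs_le.mp (abs_log_one_add_sub_taylor_le (inv_pos.mpr hx₀)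
    (by rw [inv_le_comm₀ hx₀ (by norm_num)]; linarith))).2
  have key : ((x⁻¹ - (x⁻¹ - x⁻¹ ^ 2 / 2 + x⁻¹ ^ 3 / 3 - x⁻¹ ^ 4 / 4 + x⁻¹ ^ 5 / 5 - x⁻¹ ^ 6 / 6
        + 2 * x⁻¹ ^ 7))
      - ((1 / (2 * x) + 1 / (12 * x ^ 2) - 1 / (10 * x ^ 3))
        - (1 / (2 * (x + 1)) + 1 / (12 * (x + 1) ^ 2) - 1 / (10 * (x + 1) ^ 3))))
      * (60 * x ^ 7 * (x + 1) ^ 3)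
      = 19501180 + 11579510 * (x - 10) + 2859328 * (x - 10) ^ 2 + 376089 * (x - 10) ^ 3
        + 27805 * (x - 10) ^ 4 + 1096 * (x - 10) ^ 5 + 18 * (x - 10) ^ 6 := by
    field_simp
    ring
  have hy : 0 ≤ x - 10 := by linarith
  have hpos : 0 ≤ 19501180 + 11579510 * (x - 10) + 2859328 * (x - 10) ^ 2
      + 376089 * (x - 10) ^ 3 + 27805 * (x - 10) ^ 4 + 1096 * (x - 10) ^ 5
      + 18 * (x - 10) ^ 6 := by positivity
  have hM : 0 < 60 * x ^ 7 * (x + 1) ^ 3 := by positivity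
  nlinarith

lemma log_sub_digamma_le {x : ℝ} (hx : 10 ≤ x) :
    log x - digamma x ≤ 1 / (2 * x) + 1 / (12 * x ^ 2) := by
  have hlim : Tendsto (fun y => 1 / (2 * y) + 1 / (12 * y ^ 2) - (log y - digamma y)) atTop
      (𝓝 0) := by
    simpa using ((tendsto_one_div_const_mul_pow_atTop two_pos one_ne_zero).add
      (tendsto_one_div_const_mul_pow_atTop (by norm_num : (0 : ℝ) < 12) two_ne_zero)).sub
      tendsto_log_sub_digamma_atTop
  have h := nonneg_of_tendsto_zero_of_apply_add_one_le hlim (fun y hy => by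
    linarith [inv_sub_log_one_add_inv_le hy, log_sub_digamma_sub_add_one (by linarith : 0 < y)]) hx
  linarith

lemma le_log_sub_digamma {x : ℝ} (hx : 10 ≤ x) :
    1 / (2 * x) + 1 / (12 * x ^ 2) - 1 / (10 * x ^ 3) ≤ log x - digamma x := by
  have hlim : Tendsto (fun y => (log y - digamma y)
      - (1 / (2 * y) + 1 / (12 * y ^ 2) - 1 / (10 * y ^ 3))) atTop (𝓝 0) := by
    simpa using tendsto_log_sub_digamma_atTop.sub
      (((tendsto_one_div_const_mul_pow_atTop two_pos one_ne_zero).add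
      (tendsto_one_div_const_mul_pow_atTop (by norm_num : (0 : ℝ) < 12) two_ne_zero)).sub
      (tendsto_one_div_const_mul_pow_atTop (by norm_num : (0 : ℝ) < 10) three_ne_zero))
  have h := nonneg_of_tendsto_zero_of_apply_add_one_le hlim (fun y hy => by
    linarith [le_inv_sub_log_one_add_inv hy, log_sub_digamma_sub_add_one (by linarith : 0 < y)]) hx
  linarith

lemma tendsto_sq_mul_log_sub_digamma_sub :
    Tendsto (fun x => x ^ 2 * (log x - digamma x - 1 / (2 * x))) atTop (𝓝 (1 / 12)) := by
  have hlow : Tendsto (fun x : ℝ => 1 / 12 - 1 / (10 * x)) atTop (𝓝 (1 / 12)) := by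
    simpa using (tendsto_one_div_const_mul_pow_atTop (by norm_num : (0 : ℝ) < 10)
      one_ne_zero).const_sub (1 / 12 : ℝ)
  refine tendsto_of_tendsto_of_tendsto_of_le_of_le' hlow tendsto_const_nhds ?_ ?_
  · filter_upwards [eventually_ge_atTop 10] with x hx
    have hx₀ : x ≠ 0 := by positivity
    calc 1 / 12 - 1 / (10 * x) = x ^ 2 * (1 / (12 * x ^ 2) - 1 / (10 * x ^ 3)) := by
          field_simp
      _ ≤ x ^ 2 * (log x - digamma x - 1 / (2 * x)) :=
          mul_le_mul_of_nonneg_left (by linarith [le_log_sub_digamma hx]) (sq_nonneg x)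
  · filter_upwards [eventually_ge_atTop 10] with x hx
    have hx₀ : x ≠ 0 := by positivity
    calc x ^ 2 * (log x - digamma x - 1 / (2 * x)) ≤ x ^ 2 * (1 / (12 * x ^ 2)) :=
          mul_le_mul_of_nonneg_left (by linarith [log_sub_digamma_le hx]) (sq_nonneg x)
      _ = 1 / 12 := by field_simp

theorem f1_tendsto :
    Tendsto (fun x : ℝ => 1 / (Real.log x - digamma x) - 2 * x) atTop (𝓝 (-1/3)) := by
  convert tendsto_one_div_sub_two_mul_of_tendsto_sq_mul tendsto_sq_mul_log_sub_digamma_sub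
    using 2
  norm_num
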